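/- Let (R,m) be a Noetherian local ring, I an ideal, and a ∈ I \ mI a nonzerodivisor such that a* is a nonzerodivisor in F(I) and a° is a nonzerodivisor in G(I). Suppose x ∈ m and a_1 = a, a_2, …, a_{d−1} ∈ I satisfy mI^n + aR = xI^n + (a_2,…,a_{d−1})mI^{n−1} + aR for some n ≥ 1. Then mI^n = xI^n + (a, a_2, …, a_{d−1})mI^{n−1}. -/

import Mathlib

/-!
Write `N = xIⁿ + (a₂,…,a_{d−1})mIⁿ⁻¹ ⊆ mIⁿ`. By the modular law, `mIⁿ + aR = N + aR` gives
`mIⁿ = N + (aR ∩ mIⁿ)`, so everything reduces to the colon ideal `(mIⁿ : a) = mIⁿ⁻¹`.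
If `ra ∈ mIⁿ`, then `ra ∈ Iⁿ`, and regularity of `a°` on `G(I)` pushes `r` into `Iⁿ⁻¹` one degree
at a time; then the class of `r` in `F(I)` is killed by `a*`, so it vanishes and `r ∈ mIⁿ⁻¹`.
-/

open IsLocalRing

/-- The fiber cone `F(I) = ⊕ Iⁿ/mIⁿ`, realized as the Rees algebra `R[It]` modulo
the extension of `m`. -/
noncomputable def fiberCone {R : Type*} [CommRing R] (m I : Ideal R) :=
  (reesAlgebra I) ⧸ (Ideal.map (algebraMap R (reesAlgebra I)) m)

noncomputable instance {R : Type*} [CommRing R] (m I : Ideal R) : CommRing (fiberCone m I) :=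
  Ideal.Quotient.commRing _

/-- The class of `b ∈ Iⁿ` in the degree-`n` piece of the fiber cone. -/
noncomputable def fiberClass {R : Type*} [CommRing R] (m I : Ideal R) (n : ℕ) (b : R)
    (hb : b ∈ I ^ n) : fiberCone m I :=
  Ideal.Quotient.mk _ ⟨Polynomial.monomial n b, reesAlgebra.monomial_mem.mpr hb⟩

/-- The associated graded ring `G(I) = ⊕ Iⁿ/Iⁿ⁺¹`, realized as `R[It]/I·R[It]`. -/
noncomputable def assocGraded {R : Type*} [CommRing R] (I : Ideal R) :=
  (reesAlgebra I) ⧸ (Ideal.map (algebraMap R (reesAlgebra I)) I)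

noncomputable instance {R : Type*} [CommRing R] (I : Ideal R) : CommRing (assocGraded I) :=
  Ideal.Quotient.commRing _

/-- The class of `b ∈ Iⁿ` in the degree-`n` piece of `G(I)`. -/
noncomputable def gradedClass {R : Type*} [CommRing R] (I : Ideal R) (n : ℕ) (b : R)
    (hb : b ∈ I ^ n) : assocGraded I :=
  Ideal.Quotient.mk _ ⟨Polynomial.monomial n b, reesAlgebra.monomial_mem.mpr hb⟩


namespace reesAlgebra

open Polynomial

variable {R : Type*} [CommRing R] (I J : Ideal R)

theorem coeff_mem_mul_pow_of_mem_map {g : reesAlgebra I}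
    (hg : g ∈ J.map (algebraMap R (reesAlgebra I))) (j : ℕ) :
    (g : R[X]).coeff j ∈ J * I ^ j := by
  rw [← Submodule.restrictScalars_mem R, ← Ideal.smul_top_eq_map] at hg
  refine Submodule.smul_induction_on hg (fun c hc g _ ↦ ?_) (fun g g' hg hg' ↦ ?_)
  · rw [Subalgebra.coe_smul, coeff_smul, smul_eq_mul]
    exact Ideal.mul_mem_mul hc ((mem_reesAlgebra_iff I _).mp g.2 j)
  · rw [Subalgebra.coe_add, coeff_add]
    exact add_mem hg hg'

theorem monomial_mem_map_iff (n : ℕ) {b : R} (hb : monomial n b ∈ reesAlgebra I) :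
    (⟨monomial n b, hb⟩ : reesAlgebra I) ∈ J.map (algebraMap R (reesAlgebra I)) ↔
      b ∈ J * I ^ n := by
  refine ⟨fun h ↦ by simpa using coeff_mem_mul_pow_of_mem_map I J h n, fun h ↦ ?_⟩
  induction h using Submodule.mul_induction_on' with
  | mem_mul_mem c hc s hs =>
    have hcs : (⟨monomial n (c * s), hb⟩ : reesAlgebra I) =
        algebraMap R (reesAlgebra I) c * ⟨monomial n s, monomial_mem.mpr hs⟩ :=
      Subtype.ext (C_mul_monomial).symm
    rw [hcs]
    exact Ideal.mul_mem_right _ _ (Ideal.mem_map_of_mem _ hc)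
  | add b hb' b' hb'' ih ih' =>
    have hsum : (⟨monomial n (b + b'), hb⟩ : reesAlgebra I) =
        ⟨monomial n b, monomial_mem.mpr (Ideal.mul_le_right hb')⟩ +
          ⟨monomial n b', monomial_mem.mpr (Ideal.mul_le_right hb'')⟩ :=
      Subtype.ext (map_add _ _ _)
    rw [hsum]
    exact add_mem (ih _) (ih' _)

end reesAlgebra

section GradedClasses

variable {R : Type*} [CommRing R] (m I : Ideal R) {j l : ℕ} {r b : R}

theorem fiberClass_mul (hr : r ∈ I ^ j) (hb : b ∈ I ^ l) :
    fiberClass m I j r hr * fiberClass m I l b hb =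
      fiberClass m I (j + l) (r * b) (pow_add I j l ▸ Ideal.mul_mem_mul hr hb) :=
  congrArg (Ideal.Quotient.mk _) (Subtype.ext (Polynomial.monomial_mul_monomial j l r b))

theorem fiberClass_eq_zero_iff (hb : b ∈ I ^ j) :
    fiberClass m I j b hb = 0 ↔ b ∈ m * I ^ j :=
  Ideal.Quotient.eq_zero_iff_mem.trans (reesAlgebra.monomial_mem_map_iff I m j _)

theorem gradedClass_mul (hr : r ∈ I ^ j) (hb : b ∈ I ^ l) :
    gradedClass I j r hr * gradedClass I l b hb =
      gradedClass I (j + l) (r * b) (pow_add I j l ▸ Ideal.mul_mem_mul hr hb) :=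
  congrArg (Ideal.Quotient.mk _) (Subtype.ext (Polynomial.monomial_mul_monomial j l r b))

theorem gradedClass_eq_zero_iff (hb : b ∈ I ^ j) :
    gradedClass I j b hb = 0 ↔ b ∈ I ^ (j + 1) := by
  rw [pow_succ', ← reesAlgebra.monomial_mem_map_iff I I j (reesAlgebra.monomial_mem.mpr hb)]
  exact Ideal.Quotient.eq_zero_iff_mem

end GradedClasses

section Colon

variable {R : Type*} [CommRing R] {m I : Ideal R} {a : R}

theorem mem_pow_of_mul_mem_pow_succ (ha : a ∈ I ^ 1)
    (hcirc : gradedClass I 1 a ha ∈ nonZeroDivisors (assocGraded I)) :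
    ∀ {p : ℕ} {r : R}, r * a ∈ I ^ (p + 1) → r ∈ I ^ p
  | 0, _, _ => by simp
  | p + 1, r, hra => by
    have hr : r ∈ I ^ p := mem_pow_of_mul_mem_pow_succ ha hcirc
      (Ideal.pow_le_pow_right (Nat.le_succ _) hra)
    have hzero : gradedClass I p r hr * gradedClass I 1 a ha = 0 := by
      rw [gradedClass_mul, gradedClass_eq_zero_iff]
      exact hra
    exact (gradedClass_eq_zero_iff I hr).mp
      ((mem_nonZeroDivisors_iff.mp hcirc).2 _ hzero)

theorem mul_mem_mul_pow_succ_iff (ha : a ∈ I ^ 1)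
    (hstar : fiberClass m I 1 a ha ∈ nonZeroDivisors (fiberCone m I))
    (hcirc : gradedClass I 1 a ha ∈ nonZeroDivisors (assocGraded I)) {p : ℕ} {r : R} :
    r * a ∈ m * I ^ (p + 1) ↔ r ∈ m * I ^ p := by
  refine ⟨fun hra ↦ ?_, fun hr ↦ ?_⟩
  · have hr : r ∈ I ^ p := mem_pow_of_mul_mem_pow_succ ha hcirc (Ideal.mul_le_right hra)
    have hzero : fiberClass m I p r hr * fiberClass m I 1 a ha = 0 := by
      rw [fiberClass_mul, fiberClass_eq_zero_iff]
      exact hra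
    exact (fiberClass_eq_zero_iff m I hr).mp ((mem_nonZeroDivisors_iff.mp hstar).2 _ hzero)
  · rw [pow_succ, ← mul_assoc]
    exact Ideal.mul_mem_mul hr (by simpa using ha)

end Colon

theorem Ideal.span_singleton_inf_eq_mul {R : Type*} [CommRing R] {A B : Ideal R} {a : R}
    (hcolon : ∀ r, r * a ∈ A ↔ r ∈ B) : Ideal.span {a} ⊓ A = Ideal.span {a} * B := by
  ext z
  simp only [Submodule.mem_inf, Ideal.mem_span_singleton', Ideal.mem_span_singleton_mul]
  constructor
  · rintro ⟨⟨r, rfl⟩, hra⟩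
    exact ⟨r, (hcolon r).mp hra, mul_comm a r⟩
  · rintro ⟨r, hr, rfl⟩
    exact ⟨⟨r, mul_comm r a⟩, mul_comm r a ▸ (hcolon r).mpr hr⟩

theorem Ideal.eq_sup_span_singleton_mul_of_sup_eq {R : Type*} [CommRing R] {A N B : Ideal R}
    {a : R} (hNA : N ≤ A) (hsup : A ⊔ Ideal.span {a} = N ⊔ Ideal.span {a})
    (hcolon : ∀ r, r * a ∈ A ↔ r ∈ B) : A = N ⊔ Ideal.span {a} * B :=
  calc A = (A ⊔ Ideal.span {a}) ⊓ A := (inf_eq_right.mpr le_sup_left).symm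
    _ = N ⊔ Ideal.span {a} ⊓ A := by rw [hsup, sup_inf_assoc_of_le _ hNA]
    _ = N ⊔ Ideal.span {a} * B := by rw [Ideal.span_singleton_inf_eq_mul hcolon]

/-- if `a ∈ I \ mI` is a nonzerodivisor with `a*` a nonzerodivisor in `F(I)` and
`a°` a nonzerodivisor in `G(I)`, and `mIⁿ + aR = xIⁿ + (a₂,…,a_{d−1})mI^{n−1} + aR` for some
`n ≥ 1`, then `mIⁿ = xIⁿ + (a, a₂, …, a_{d−1})mI^{n−1}`. -/
theorem stmt10 {R : Type*} [CommRing R] [IsLocalRing R]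
    (I : Ideal R) (a : R) (haI : a ∈ I)
    (hstar : fiberClass (maximalIdeal R) I 1 a (by simpa using haI) ∈
      nonZeroDivisors (fiberCone (maximalIdeal R) I))
    (hcirc : gradedClass I 1 a (by simpa using haI) ∈ nonZeroDivisors (assocGraded I))
    (x : R) (hx : x ∈ maximalIdeal R)
    (k : ℕ) (rest : Fin k → R) (hrest : ∀ i, rest i ∈ I)
    (n : ℕ) (hn : 1 ≤ n)
    (h : maximalIdeal R * I ^ n + Ideal.span {a} =
        Ideal.span {x} * I ^ n +
          Ideal.span (Set.range rest) * (maximalIdeal R * I ^ (n - 1)) +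
          Ideal.span {a}) :
    maximalIdeal R * I ^ n =
      Ideal.span {x} * I ^ n +
        (Ideal.span {a} ⊔ Ideal.span (Set.range rest)) *
          (maximalIdeal R * I ^ (n - 1)) := by
  obtain ⟨p, rfl⟩ : ∃ p, n = p + 1 := ⟨n - 1, (Nat.sub_add_cancel hn).symm⟩
  rw [Nat.add_sub_cancel] at h ⊢
  have hrestI : Ideal.span (Set.range rest) ≤ I :=
    Ideal.span_le.mpr (Set.range_subset_iff.mpr hrest)
  have hle : Ideal.span {x} * I ^ (p + 1) +
      Ideal.span (Set.range rest) * (maximalIdeal R * I ^ p) ≤ maximalIdeal R * I ^ (p + 1) := by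
    refine sup_le (Ideal.mul_mono_left ((Ideal.span_singleton_le_iff_mem _).mpr hx)) ?_
    calc Ideal.span (Set.range rest) * (maximalIdeal R * I ^ p)
        ≤ I * (maximalIdeal R * I ^ p) := Ideal.mul_mono_left hrestI
      _ = maximalIdeal R * I ^ (p + 1) := by ring
  rw [Ideal.eq_sup_span_singleton_mul_of_sup_eq hle h
    (fun r ↦ mul_mem_mul_pow_succ_iff _ hstar hcirc), Ideal.sup_mul]
  simp only [Submodule.add_eq_sup]
  ac_rfl
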